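/- arXiv:0705.1922 — 2 statements merged into one kernel-verified Lean document; each statement's English description precedes it below -/
import Mathlib

section
/- Truncation theorem for sums of dependent variables with independent signs: On a common probability space, let X_1,...,X_N be real random variables (possibly dependent) whose tails satisfy P(|X_n| ≥ x) ≤ B e^{-α x^β} for all x ≥ x_0 > 0 and all n, for constants B, α, β > 0. Let φ_1,...,φ_N be jointly independent real random variables with −1 ≤ φ_n ≤ 1 and E[φ_n] = 0, with the family {φ_n} independent of the family {X_n}. Let A_1,...,A_N be deterministic coefficients with 0 ≤ A_n ≤ A. Set S_N = ∑_{n=1}^N A_n X_n φ_n. Then for all N > 0 and all x ≥ x_0^{(2+β)/2}: P(|S_N| ≥ √N · x) ≤ 2·max[2, NB] · exp(−min[1/(2A²), α] · x^{2β/(2+β)}). -/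
/-!
Truncate at level `T = x^{2/(2+β)}`, chosen so that `x² / T² = T^β`. On the event that all
`|X_n| < T`, condition on `X`, which is independent of `φ`: the sum is then a weighted sum of
independent centred `[-1, 1]`-valued variables with weights at most `A T`, and Hoeffding bounds
its tail by `2 exp(-N x² / (2 N A² T²)) = 2 exp(-T^β / (2A²))`. By the union bound the
complementary event has probability at most `N B exp(-α T^β)`, and the hypothesis on `x` is
exactly `x₀ ≤ T`.
-/

open MeasureTheory ProbabilityTheory Real
open scoped NNReal ENNReal

lemma le_rpow_two_div_of_rpow_le {β x₀ x : ℝ} (hβ : 0 < β) (hx₀ : 0 < x₀)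
    (hx : x₀ ^ ((2 + β) / 2) ≤ x) : x₀ ≤ x ^ (2 / (2 + β)) := by
  rw [← inv_div, le_rpow_inv_iff_of_pos hx₀.le ((rpow_pos_of_pos hx₀ _).le.trans hx)
    (by positivity)]
  exact hx

lemma sq_eq_rpow_mul_sq_rpow {β x : ℝ} (hx : 0 < x) (hβ : 2 + β ≠ 0) :
    x ^ 2 = x ^ (2 * β / (2 + β)) * (x ^ (2 / (2 + β))) ^ 2 := by
  rw [← rpow_natCast, ← rpow_natCast (x ^ _), ← rpow_mul hx.le, ← rpow_add hx]
  congr 1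
  field_simp
  push_cast
  ring

lemma mul_exp_add_mul_exp_le {u v a b y : ℝ} (hv : 0 ≤ v) (hy : 0 ≤ y) :
    u * exp (-(a * y)) + v * exp (-(b * y)) ≤ 2 * max u v * exp (-min a b * y) := by
  have hmax : 0 ≤ max u v := le_max_of_le_right hv
  have hexp {c : ℝ} (hc : min a b ≤ c) : exp (-(c * y)) ≤ exp (-min a b * y) := by
    rw [exp_le_exp, neg_mul, neg_le_neg_iff]
    exact mul_le_mul_of_nonneg_right hc hy
  have hu_term := mul_le_mul (le_max_left u v) (hexp (min_le_left a b)) (exp_pos _).le hmax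
  have hv_term := mul_le_mul (le_max_right u v) (hexp (min_le_right a b)) (exp_pos _).le hmax
  linarith

namespace ProbabilityTheory

variable {Ω : Type*} [MeasurableSpace Ω] {μ : Measure Ω}

lemma HasSubgaussianMGF.measure_abs_ge_le [IsFiniteMeasure μ] {X : Ω → ℝ} {c : ℝ≥0}
    (h : HasSubgaussianMGF X c μ) {ε : ℝ} (hε : 0 ≤ ε) :
    μ {ω | ε ≤ |X ω|} ≤ ENNReal.ofReal (2 * exp (-ε ^ 2 / (2 * c))) := by
  have tail {Y : Ω → ℝ} (hY : HasSubgaussianMGF Y c μ) :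
      μ {ω | ε ≤ Y ω} ≤ ENNReal.ofReal (exp (-ε ^ 2 / (2 * c))) :=
    (ENNReal.le_ofReal_iff_toReal_le (measure_ne_top _ _) (exp_pos _).le).2 (hY.measure_ge_le hε)
  calc μ {ω | ε ≤ |X ω|} ≤ μ ({ω | ε ≤ X ω} ∪ {ω | ε ≤ (-X) ω}) :=
        measure_mono fun ω (hω : ε ≤ |X ω|) ↦ le_abs.1 hω
    _ ≤ μ {ω | ε ≤ X ω} + μ {ω | ε ≤ (-X) ω} := measure_union_le _ _
    _ ≤ ENNReal.ofReal (exp (-ε ^ 2 / (2 * c))) + ENNReal.ofReal (exp (-ε ^ 2 / (2 * c))) :=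
        add_le_add (tail h) (tail h.neg)
    _ = ENNReal.ofReal (2 * exp (-ε ^ 2 / (2 * c))) := by
        rw [← ENNReal.ofReal_add (exp_pos _).le (exp_pos _).le]
        ring_nf

lemma hasSubgaussianMGF_sum_mul_of_iIndepFun {ι : Type*} [Fintype ι] {φ : ι → Ω → ℝ}
    (hindep : iIndepFun φ μ) (hmeas : ∀ i, Measurable (φ i))
    (hbdd : ∀ i ω, φ i ω ∈ Set.Icc (-1 : ℝ) 1) (hmean : ∀ i, μ[φ i] = 0)
    {c : ι → ℝ} {K : ℝ} (hc : ∀ i, |c i| ≤ K) :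
    HasSubgaussianMGF (fun ω ↦ ∑ i, c i * φ i ω) (Fintype.card ι * ‖K‖₊ ^ 2) μ := by
  have := hindep.isProbabilityMeasure
  have hterm (i : ι) : HasSubgaussianMGF (fun ω ↦ c i * φ i ω) (‖K‖₊ ^ 2) μ := by
    have hIcc (ω : Ω) : c i * φ i ω ∈ Set.Icc (-K) K := by
      rw [Set.mem_Icc, ← abs_le, abs_mul]
      exact (mul_le_of_le_one_right (abs_nonneg _) (abs_le.2 (hbdd i ω))).trans (hc i)
    convert hasSubgaussianMGF_of_mem_Icc_of_integral_eq_zero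
      ((hmeas i).const_mul (c i)).aemeasurable (ae_of_all _ hIcc)
      (by rw [integral_const_mul, hmean i, mul_zero]) using 1
    ext
    simp [sub_neg_eq_add, ← two_mul]
  simpa using HasSubgaussianMGF.sum_of_iIndepFun
    (hindep.comp (fun i x ↦ c i * x) fun i ↦ measurable_const_mul (c i))
    (s := Finset.univ) fun i _ ↦ hterm i

lemma measure_pair_mem_le_of_indepFun [IsProbabilityMeasure μ] {α β : Type*}
    [MeasurableSpace α] [MeasurableSpace β] {X : Ω → α} {Y : Ω → β}
    (hX : Measurable X) (hY : Measurable Y) (hXY : IndepFun X Y μ)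
    {S : Set (α × β)} (hS : MeasurableSet S) {p : ℝ≥0∞}
    (hp : ∀ a, μ {ω | (a, Y ω) ∈ S} ≤ p) :
    μ {ω | (X ω, Y ω) ∈ S} ≤ p := by
  have := Measure.isProbabilityMeasure_map (μ := μ) hX.aemeasurable
  calc μ {ω | (X ω, Y ω) ∈ S} = (μ.map X).prod (μ.map Y) S := by
        rw [← (indepFun_iff_map_prod_eq_prod_map_map hX.aemeasurable hY.aemeasurable).1 hXY,
          Measure.map_apply (hX.prodMk hY) hS]
        rfl
    _ = ∫⁻ a, μ {ω | (a, Y ω) ∈ S} ∂μ.map X := by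
        rw [Measure.prod_apply hS]
        congr with a
        rw [Measure.map_apply hY (measurable_prodMk_left hS)]
        rfl
    _ ≤ ∫⁻ _, p ∂μ.map X := lintegral_mono hp
    _ = p := by simp

lemma measure_exists_le_abs_le_of_tail {ι : Type*} [Fintype ι] {X : ι → Ω → ℝ}
    {B α β x₀ T : ℝ} (htail : ∀ i, ∀ x : ℝ, x₀ ≤ x →
      μ {ω | x ≤ |X i ω|} ≤ ENNReal.ofReal (B * exp (-α * x ^ β)))
    (hT : x₀ ≤ T) :
    μ {ω | ∃ i, T ≤ |X i ω|} ≤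
      ENNReal.ofReal (Fintype.card ι * B * exp (-α * T ^ β)) := by
  rw [Set.ofPred_exists]
  calc μ (⋃ i, {ω | T ≤ |X i ω|}) ≤ ∑ i, μ {ω | T ≤ |X i ω|} :=
        measure_iUnion_fintype_le _ _
    _ ≤ ∑ _ : ι, ENNReal.ofReal (B * exp (-α * T ^ β)) :=
        Finset.sum_le_sum fun i _ ↦ htail i T hT
    _ = ENNReal.ofReal (Fintype.card ι * B * exp (-α * T ^ β)) := by
        rw [Finset.sum_const, nsmul_eq_mul, Finset.card_univ, mul_assoc,
          ENNReal.ofReal_mul (Nat.cast_nonneg _), ENNReal.ofReal_natCast]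

lemma measure_abs_sum_mul_ge_le_add_measure_exists {ι : Type*} [Fintype ι]
    {X φ : ι → Ω → ℝ}
    (hXmeas : ∀ i, Measurable (X i)) (hφmeas : ∀ i, Measurable (φ i))
    (hφindep : iIndepFun φ μ) (hφbdd : ∀ i ω, φ i ω ∈ Set.Icc (-1 : ℝ) 1)
    (hφmean : ∀ i, μ[φ i] = 0)
    (hXφindep : IndepFun (fun ω i ↦ X i ω) (fun ω i ↦ φ i ω) μ)
    {A : ι → ℝ} {K : ℝ} (hA : ∀ i, |A i| ≤ K) (T : ℝ) {s : ℝ} (hs : 0 ≤ s) :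
    μ {ω | s ≤ |∑ i, A i * X i ω * φ i ω|} ≤
      ENNReal.ofReal (2 * exp (-s ^ 2 / (2 * (Fintype.card ι * (K * T) ^ 2)))) +
        μ {ω | ∃ i, T ≤ |X i ω|} := by
  have := hφindep.isProbabilityMeasure
  set S : Set ((ι → ℝ) × (ι → ℝ)) :=
    {p | (∀ i, |p.1 i| < T) ∧ s ≤ |∑ i, A i * p.1 i * p.2 i|} with hS_def
  have hS : MeasurableSet S := by
    rw [hS_def, Set.ofPred_and, Set.ofPred_forall]
    exact (MeasurableSet.iInter fun i ↦ measurableSet_lt (by fun_prop) measurable_const).inter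
      (measurableSet_le measurable_const (by fun_prop))
  have htruncated : μ {ω | ((fun i ↦ X i ω), (fun i ↦ φ i ω)) ∈ S} ≤
      ENNReal.ofReal (2 * exp (-s ^ 2 / (2 * (Fintype.card ι * (K * T) ^ 2)))) := by
    refine measure_pair_mem_le_of_indepFun (by fun_prop) (by fun_prop) hXφindep hS fun a ↦ ?_
    by_cases ha : ∀ i, |a i| < T
    · have hc (i : ι) : |A i * a i| ≤ K * T := by
        rw [abs_mul]
        exact mul_le_mul (hA i) (ha i).le (abs_nonneg _) ((abs_nonneg _).trans (hA i))
      have hsum := hasSubgaussianMGF_sum_mul_of_iIndepFun hφindep hφmeas hφbdd hφmean hc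
      simpa [S, ha, mul_pow, sq_abs] using hsum.measure_abs_ge_le hs
    · simp [S, ha]
  calc μ {ω | s ≤ |∑ i, A i * X i ω * φ i ω|}
      ≤ μ ({ω | ((fun i ↦ X i ω), (fun i ↦ φ i ω)) ∈ S} ∪
          {ω | ∃ i, T ≤ |X i ω|}) := by
        refine measure_mono fun ω hω ↦ ?_
        by_cases hX : ∀ i, |X i ω| < T
        · exact Or.inl ⟨hX, hω⟩
        · simp only [not_forall, not_lt] at hX
          exact Or.inr hX
    _ ≤ _ := measure_union_le _ _
    _ ≤ _ := by gcongr

end ProbabilityTheory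

theorem truncation_theorem_general {Ω : Type*} [MeasurableSpace Ω] (μ : Measure Ω)
    [IsProbabilityMeasure μ] (N : ℕ) (hN : 0 < N)
    (X φ : Fin N → Ω → ℝ)
    (hXmeas : ∀ n, Measurable (X n)) (hφmeas : ∀ n, Measurable (φ n))
    (B α β x₀ : ℝ) (hB : 0 < B) (hβ : 0 < β) (hx₀ : 0 < x₀)
    (htail : ∀ n, ∀ x : ℝ, x₀ ≤ x →
      μ {ω | x ≤ |X n ω|} ≤ ENNReal.ofReal (B * Real.exp (-α * x ^ β)))
    (hφindep : iIndepFun φ μ)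
    (hφbdd : ∀ n ω, φ n ω ∈ Set.Icc (-1 : ℝ) 1)
    (hφmean : ∀ n, μ[φ n] = 0)
    (hXφindep : IndepFun (fun ω => fun n => X n ω) (fun ω => fun n => φ n ω) μ)
    (A : Fin N → ℝ) (Abd : ℝ)
    (hA : ∀ n, A n ∈ Set.Icc (0 : ℝ) Abd)
    (x : ℝ) (hx : x₀ ^ ((2 + β) / 2) ≤ x) :
    μ {ω | Real.sqrt N * x ≤ |∑ n, A n * X n ω * φ n ω|}
      ≤ ENNReal.ofReal (2 * max 2 (N * B) *
          Real.exp (-(min (1 / (2 * Abd ^ 2)) α) * x ^ (2 * β / (2 + β)))) := by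
  have hxpos : 0 < x := (rpow_pos_of_pos hx₀ _).trans_le hx
  set T := x ^ (2 / (2 + β)) with hT
  set y := x ^ (2 * β / (2 + β)) with hy
  have hT_pow : T ^ β = y := by
    rw [hT, hy, ← rpow_mul hxpos.le]
    ring_nf
  have hexponent : (√N * x) ^ 2 / (2 * (N * (Abd * T) ^ 2)) = 1 / (2 * Abd ^ 2) * y := by
    have hT_pos : 0 < T := rpow_pos_of_pos hxpos _
    rw [mul_pow, sq_sqrt (Nat.cast_nonneg N),
      sq_eq_rpow_mul_sq_rpow (β := β) hxpos (by positivity), ← hT, ← hy]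
    field_simp
  calc μ {ω | √N * x ≤ |∑ n, A n * X n ω * φ n ω|}
      ≤ ENNReal.ofReal (2 * exp (-(√N * x) ^ 2 / (2 * (Fintype.card (Fin N) * (Abd * T) ^ 2))))
          + μ {ω | ∃ n, T ≤ |X n ω|} :=
        measure_abs_sum_mul_ge_le_add_measure_exists hXmeas hφmeas hφindep hφbdd hφmean
          hXφindep (fun n ↦ (abs_of_nonneg (hA n).1).trans_le (hA n).2) T (by positivity)
    _ ≤ ENNReal.ofReal (2 * exp (-(1 / (2 * Abd ^ 2) * y)))
          + ENNReal.ofReal (N * B * exp (-(α * y))) := by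
        rw [Fintype.card_fin, neg_div, hexponent]
        gcongr
        simpa [hT_pow] using
          measure_exists_le_abs_le_of_tail (T := T) htail (le_rpow_two_div_of_rpow_le hβ hx₀ hx)
    _ = ENNReal.ofReal (2 * exp (-(1 / (2 * Abd ^ 2) * y)) + N * B * exp (-(α * y))) :=
        (ENNReal.ofReal_add (by positivity) (by positivity)).symm
    _ ≤ _ := ENNReal.ofReal_le_ofReal (mul_exp_add_mul_exp_le (by positivity) (by positivity))

/-- Truncation theorem for sums of dependent variables with independent phases
(Theorem 11 / Appendix A of the paper): if the (possibly dependent) `X_n` have uniformly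
exponentially decaying tails `P(|X_n| ≥ x) ≤ B e^{-α x^β}` for `x ≥ x₀`, the `φ_n` are
jointly independent, `[-1,1]`-valued, zero mean, and independent of the `X_n`, and
`0 ≤ A_n ≤ A`, then for `S_N = ∑ A_n X_n φ_n` and all `x ≥ x₀^{(2+β)/2}`,
`P(|S_N| ≥ √N x) ≤ 2 max[2, NB] exp(−min[1/(2A²), α] x^{2β/(2+β)})`. -/
theorem truncation_theorem {Ω : Type*} [MeasurableSpace Ω] (μ : Measure Ω)
    [IsProbabilityMeasure μ] (N : ℕ) (hN : 0 < N)
    (X φ : Fin N → Ω → ℝ)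
    (hXmeas : ∀ n, Measurable (X n)) (hφmeas : ∀ n, Measurable (φ n))
    (B α β x₀ : ℝ) (hB : 0 < B) (hα : 0 < α) (hβ : 0 < β) (hx₀ : 0 < x₀)
    (htail : ∀ n, ∀ x : ℝ, x₀ ≤ x →
      μ {ω | x ≤ |X n ω|} ≤ ENNReal.ofReal (B * Real.exp (-α * x ^ β)))
    (hφindep : iIndepFun φ μ)
    (hφbdd : ∀ n ω, φ n ω ∈ Set.Icc (-1 : ℝ) 1)
    (hφmean : ∀ n, μ[φ n] = 0)
    (hXφindep : IndepFun (fun ω => fun n => X n ω) (fun ω => fun n => φ n ω) μ)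
    (A : Fin N → ℝ) (Abd : ℝ) (hAbd : 0 < Abd)
    (hA : ∀ n, A n ∈ Set.Icc (0 : ℝ) Abd)
    (x : ℝ) (hx : x₀ ^ ((2 + β) / 2) ≤ x) :
    μ {ω | Real.sqrt N * x ≤ |∑ n, A n * X n ω * φ n ω|}
      ≤ ENNReal.ofReal (2 * max 2 (N * B) *
          Real.exp (-(min (1 / (2 * Abd ^ 2)) α) * x ^ (2 * β / (2 + β)))) :=
  truncation_theorem_general μ N hN X φ hXmeas hφmeas B α β x₀ hB hβ hx₀ htail hφindep hφbdd hφmean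
    hXφindep A Abd hA x hx
end

section
/- Maurer's inequality: Let X_1,...,X_N be independent real random variables with X_n ≥ 0 and E[X_n²] < ∞. Let S_N = ∑_{n=1}^N X_n. Then for every x > 0: P(S_N − E[S_N] ≤ −Nx) ≤ exp(−N²x²/(2∑_{n=1}^N E[X_n²])). -/
/-!
A lower-tail Chernoff bound evaluates the moment generating function only at negative arguments
`-t`, where for nonnegative variables second moments control it: `exp (-u) ≤ 1 - u + u² / 2` for
`u ≥ 0`. Together with `1 + y ≤ exp y` and independence, the moment generating function of `S_N`
at `-t` is at most `exp (-t E[S_N] + t² ∑ E[X_n²] / 2)`, and the optimal choice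
`t = N x / ∑ E[X_n²]` gives the bound.
-/

open MeasureTheory ProbabilityTheory Real

-- `exp x = 1 / exp (-x) ≤ 1 / (1 - x + x² / 2)` and `(1 + x + x² / 2) (1 - x + x² / 2) ≥ 1`.
lemma Real.exp_le_one_add_add_sq_div_two_of_nonpos {x : ℝ} (hx : x ≤ 0) :
    exp x ≤ 1 + x + x ^ 2 / 2 := by
  have hpos : 0 < 1 - x + x ^ 2 / 2 := by nlinarith
  calc exp x = (exp (-x))⁻¹ := by rw [exp_neg, inv_inv]
    _ ≤ (1 - x + x ^ 2 / 2)⁻¹ := by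
      gcongr
      simpa [sub_eq_add_neg] using quadratic_le_exp_of_nonneg (neg_nonneg.mpr hx)
    _ ≤ 1 + x + x ^ 2 / 2 := by
      rw [inv_le_iff_one_le_mul₀ hpos]
      nlinarith [sq_nonneg (x ^ 2)]

lemma MeasureTheory.Integrable.of_integrable_sq {α : Type*} [MeasurableSpace α] {μ : Measure α}
    [IsFiniteMeasure μ] {f : α → ℝ} (hf : AEStronglyMeasurable f μ)
    (hf2 : Integrable (fun a => f a ^ 2) μ) : Integrable f μ :=
  ((memLp_two_iff_integrable_sq hf).2 hf2).integrable one_le_two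

namespace ProbabilityTheory

variable {Ω : Type*} [MeasurableSpace Ω] {μ : Measure Ω}

lemma integrable_exp_mul_of_nonpos_of_nonneg [IsFiniteMeasure μ] {Y : Ω → ℝ} {t : ℝ}
    (hY : AEMeasurable Y μ) (hY0 : ∀ᵐ ω ∂μ, 0 ≤ Y ω) (ht : t ≤ 0) :
    Integrable (fun ω => exp (t * Y ω)) μ := by
  refine (integrable_const 1).mono' (hY.const_mul t).exp.aestronglyMeasurable ?_
  filter_upwards [hY0] with ω hω
  rw [norm_of_nonneg (exp_pos _).le, exp_le_one_iff]
  exact mul_nonpos_of_nonpos_of_nonneg ht hω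

lemma measureReal_sub_le_neg_le_exp_of_mgf_le [IsFiniteMeasure μ] {S : Ω → ℝ} {m v ε : ℝ}
    (hv : 0 ≤ v) (hε : 0 ≤ ε) (h_int : ∀ t ≤ 0, Integrable (fun ω => exp (t * S ω)) μ)
    (h_mgf : ∀ t ≤ 0, mgf S μ t ≤ exp (t * m + t ^ 2 * v / 2)) :
    μ.real {ω | S ω - m ≤ -ε} ≤ exp (-ε ^ 2 / (2 * v)) := by
  set t := -(ε / v)
  have ht : t ≤ 0 := neg_nonpos.mpr (div_nonneg hε hv)
  have h_event : {ω | S ω - m ≤ -ε} = {ω | S ω ≤ m - ε} := by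
    ext ω
    simp only [Set.mem_ofPred_eq]
    constructor <;> intro h <;> linarith
  calc μ.real {ω | S ω - m ≤ -ε}
      ≤ exp (-t * (m - ε)) * mgf S μ t := by
        rw [h_event]
        exact measure_le_le_exp_mul_mgf _ ht (h_int t ht)
    _ ≤ exp (-t * (m - ε)) * exp (t * m + t ^ 2 * v / 2) := by gcongr; exact h_mgf t ht
    _ = exp (-ε ^ 2 / (2 * v)) := by
        rw [← exp_add]
        congr 1
        rcases hv.eq_or_lt with rfl | hv
        · simp [t]
        · simp only [t]
          field_simp
          ring

variable [IsProbabilityMeasure μ]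

lemma mgf_le_one_add_add_sq_div_two_of_nonneg {Y : Ω → ℝ} {t : ℝ}
    (hY : AEMeasurable Y μ) (hY0 : ∀ᵐ ω ∂μ, 0 ≤ Y ω) (hY2 : Integrable (fun ω => Y ω ^ 2) μ)
    (ht : t ≤ 0) :
    mgf Y μ t ≤ 1 + t * μ[Y] + t ^ 2 * μ[fun ω => Y ω ^ 2] / 2 := by
  have hY1 : Integrable Y μ := .of_integrable_sq hY.aestronglyMeasurable hY2
  have h_lin : Integrable (fun ω => 1 + t * Y ω) μ := (integrable_const 1).add (hY1.const_mul t)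
  have h_sq : Integrable (fun ω => t ^ 2 * Y ω ^ 2 / 2) μ := (hY2.const_mul (t ^ 2)).div_const 2
  calc mgf Y μ t ≤ μ[fun ω => 1 + t * Y ω + t ^ 2 * Y ω ^ 2 / 2] := by
        refine integral_mono_ae (integrable_exp_mul_of_nonpos_of_nonneg hY hY0 ht)
          (h_lin.add h_sq) ?_
        filter_upwards [hY0] with ω hω
        have := exp_le_one_add_add_sq_div_two_of_nonpos (mul_nonpos_of_nonpos_of_nonneg ht hω)
        linarith [mul_pow t (Y ω) 2]
    _ = 1 + t * μ[Y] + t ^ 2 * μ[fun ω => Y ω ^ 2] / 2 := by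
        rw [integral_add h_lin h_sq, integral_add (integrable_const 1) (hY1.const_mul t),
          integral_div, integral_const_mul, integral_const_mul]
        simp

lemma mgf_le_exp_of_nonneg {Y : Ω → ℝ} {t : ℝ}
    (hY : AEMeasurable Y μ) (hY0 : ∀ᵐ ω ∂μ, 0 ≤ Y ω) (hY2 : Integrable (fun ω => Y ω ^ 2) μ)
    (ht : t ≤ 0) :
    mgf Y μ t ≤ exp (t * μ[Y] + t ^ 2 * μ[fun ω => Y ω ^ 2] / 2) := by
  have := add_one_le_exp (t * μ[Y] + t ^ 2 * μ[fun ω => Y ω ^ 2] / 2)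
  linarith [mgf_le_one_add_add_sq_div_two_of_nonneg hY hY0 hY2 ht]

lemma iIndepFun.mgf_sum_le_exp_of_nonneg {ι : Type*} {X : ι → Ω → ℝ} (h_indep : iIndepFun X μ)
    (hX : ∀ i, AEMeasurable (X i) μ) (hX0 : ∀ i, ∀ᵐ ω ∂μ, 0 ≤ X i ω)
    (hX2 : ∀ i, Integrable (fun ω => X i ω ^ 2) μ) (s : Finset ι) {t : ℝ} (ht : t ≤ 0) :
    mgf (∑ i ∈ s, X i) μ t
      ≤ exp (t * ∑ i ∈ s, μ[X i] + t ^ 2 * (∑ i ∈ s, μ[fun ω => X i ω ^ 2]) / 2) := by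
  rw [h_indep.mgf_sum₀ hX, Finset.mul_sum, Finset.mul_sum, Finset.sum_div,
    ← Finset.sum_add_distrib, exp_sum]
  exact Finset.prod_le_prod (fun i _ => mgf_nonneg)
    fun i _ => mgf_le_exp_of_nonneg (hX i) (hX0 i) (hX2 i) ht

end ProbabilityTheory

/-- Maurer's inequality: for independent nonnegative real random variables `X_n` with
finite second moments and `S_N = ∑ X_n`, for every `x > 0`,
`P(S_N − E S_N ≤ −N x) ≤ exp(−N²x²/(2 ∑ E[X_n²]))`. -/
theorem maurer_inequality {Ω : Type*} [MeasurableSpace Ω] (μ : Measure Ω)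
    [IsProbabilityMeasure μ] (N : ℕ)
    (X : Fin N → Ω → ℝ) (hXmeas : ∀ n, Measurable (X n))
    (hXnn : ∀ n ω, 0 ≤ X n ω)
    (hindep : iIndepFun X μ)
    (hint : ∀ n, Integrable (fun ω => (X n ω) ^ 2) μ)
    (x : ℝ) (hx : 0 < x) :
    μ {ω | (∑ n, X n ω) - μ[fun ω' => ∑ n, X n ω'] ≤ -((N : ℝ) * x)}
      ≤ ENNReal.ofReal
        (Real.exp (-((N : ℝ) ^ 2 * x ^ 2) /
          (2 * ∑ n, μ[fun ω' => (X n ω') ^ 2]))) := by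
  have hX : ∀ n, AEMeasurable (X n) μ := fun n => (hXmeas n).aemeasurable
  have hX0 : ∀ n, ∀ᵐ ω ∂μ, 0 ≤ X n ω := fun n => ae_of_all _ (hXnn n)
  have hX1 : ∀ n, Integrable (X n) μ := fun n =>
    .of_integrable_sq (hXmeas n).aestronglyMeasurable (hint n)
  have h_mgf : ∀ t ≤ 0, mgf (fun ω => ∑ n, X n ω) μ t ≤ exp (t * μ[fun ω => ∑ n, X n ω]
      + t ^ 2 * (∑ n, μ[fun ω => X n ω ^ 2]) / 2) := fun t ht => by
    rw [integral_finsetSum _ fun n _ => hX1 n, ← Finset.sum_fn]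
    exact hindep.mgf_sum_le_exp_of_nonneg hX hX0 hint _ ht
  have h_tail := measureReal_sub_le_neg_le_exp_of_mgf_le
    (Finset.sum_nonneg fun n _ => integral_nonneg fun ω => sq_nonneg (X n ω))
    (mul_nonneg N.cast_nonneg hx.le)
    (fun t ht => integrable_exp_mul_of_nonpos_of_nonneg (by fun_prop)
      (ae_of_all _ fun ω => Finset.sum_nonneg fun n _ => hXnn n ω) ht) h_mgf
  rw [mul_pow] at h_tail
  exact (ENNReal.le_ofReal_iff_toReal_le (measure_ne_top _ _) (exp_pos _).le).2 h_tail
end
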